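/- For every integer n ≥ 1, the Lebesgue measure of the set {x ∈ [0,1] : |Σ_{j=1}^n cos(4π·8^j·x)| ≥ n^{3/4}} is at most 1/n. -/

import Mathlib

/-!
Write the sum as `S x = ∑ a ∈ A, cos (2π a x)` with `A = {2·8^j : 1 ≤ j ≤ n}`. Expanding `S⁴` and
using the product-to-sum formula twice, `∫₀¹ S⁴` counts the solutions of `a ± b ± c ± d = 0` in `A`;
since no element of the lacunary set `A` is the sum of three others, only the solutions of
`a + b = c + d` survive, and `∫₀¹ S⁴ = 3/8 · E(A)`. As `A` is a Sidon set, its additive energy is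
at most `2 n²`, so `∫₀¹ S⁴ ≤ 3n²/4`, and Markov's inequality for `S⁴` at level `n³` gives `1/n`.
-/

open MeasureTheory
open scoped Real ENNReal Combinatorics.Additive

open Real Finset

theorem cos_mul_cos_two_pi_int_mul (p q : ℤ) (x : ℝ) :
    cos (2 * π * p * x) * cos (2 * π * q * x) =
      (cos (2 * π * ((p - q : ℤ) : ℝ) * x) + cos (2 * π * ((p + q : ℤ) : ℝ) * x)) / 2 := by
  have h := two_mul_cos_mul_cos (2 * π * p * x) (2 * π * q * x)
  push_cast
  rw [mul_sub, mul_add, sub_mul, add_mul]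
  linarith

theorem integral_cos_two_pi_int_mul (k : ℤ) :
    ∫ x in (0 : ℝ)..1, cos (2 * π * k * x) = if k = 0 then 1 else 0 := by
  split_ifs with hk
  · simp [hk]
  have hk' : (2 * π * k : ℝ) ≠ 0 := by simp [hk, pi_ne_zero]
  have hsin : sin (2 * π * k) = 0 := by
    simpa [mul_comm, mul_assoc, mul_left_comm] using sin_int_mul_pi (2 * k)
  simp [intervalIntegral.integral_comp_mul_left (fun x => cos x) hk', integral_cos, hsin]

theorem integral_cos_mul_cos_two_pi_int_mul (p q : ℤ) :
    ∫ x in (0 : ℝ)..1, cos (2 * π * p * x) * cos (2 * π * q * x) =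
      ((if p = q then 1 else 0) + if p = -q then 1 else 0) / 2 := by
  simp_rw [cos_mul_cos_two_pi_int_mul]
  rw [intervalIntegral.integral_div, intervalIntegral.integral_add
      (Continuous.intervalIntegrable (by fun_prop) _ _)
      (Continuous.intervalIntegrable (by fun_prop) _ _),
    integral_cos_two_pi_int_mul, integral_cos_two_pi_int_mul]
  simp only [sub_eq_zero, add_eq_zero_iff_eq_neg]

theorem integral_cos_mul_cos_mul_cos_mul_cos {a b c d : ℕ} (ha : a ≠ b + c + d)
    (hb : b ≠ a + c + d) (hc : c ≠ a + b + d) (hd : d ≠ a + b + c) :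
    ∫ x in (0 : ℝ)..1, cos (2 * π * a * x) * cos (2 * π * b * x) *
        (cos (2 * π * c * x) * cos (2 * π * d * x)) =
      ((if a + b = c + d then 1 else 0) + (if a + c = b + d then 1 else 0) +
        if a + d = b + c then 1 else 0) / 8 := by
  have hcast (u : ℕ) (x : ℝ) : cos (2 * π * u * x) = cos (2 * π * ((u : ℤ) : ℝ) * x) := by
    rw [Int.cast_natCast]
  simp_rw [hcast, cos_mul_cos_two_pi_int_mul, div_mul_div_comm, add_mul, mul_add]
  rw [intervalIntegral.integral_div, intervalIntegral.integral_add, intervalIntegral.integral_add,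
    intervalIntegral.integral_add]
  all_goals try exact Continuous.intervalIntegrable (by fun_prop) _ _
  simp only [integral_cos_mul_cos_two_pi_int_mul]
  have h1 : (a : ℤ) - b = c - d ↔ a + d = b + c := by omega
  have h2 : (a : ℤ) - b = -(c - d) ↔ a + c = b + d := by omega
  have h3 : (a : ℤ) + b = c + d ↔ a + b = c + d := by omega
  have h4 : ¬ (a : ℤ) - b = c + d := by omega
  have h5 : ¬ (a : ℤ) - b = -(c + d) := by omega
  have h6 : ¬ (a : ℤ) + b = c - d := by omega
  have h7 : ¬ (a : ℤ) + b = -(c - d) := by omega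
  have h8 : ¬ (a : ℤ) + b = -(c + d) := by omega
  simp only [h1, h2, h3, h4, h5, h6, h7, h8, if_false]
  ring

theorem Finset.addEnergy_eq_sum_ite {α R : Type*} [Add α] [DecidableEq α] [AddCommMonoidWithOne R]
    (s t : Finset α) :
    (E[s, t] : R) = ∑ a ∈ s, ∑ b ∈ s, ∑ c ∈ t, ∑ d ∈ t, if a + c = b + d then 1 else 0 := by
  rw [addEnergy, card_filter]
  push_cast
  simp_rw [sum_product]

theorem integral_sum_cos_pow_four_eq_addEnergy {A : Finset ℕ}
    (hA : ∀ a ∈ A, ∀ b ∈ A, ∀ c ∈ A, ∀ d ∈ A, a ≠ b + c + d) :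
    ∫ x in (0 : ℝ)..1, (∑ a ∈ A, cos (2 * π * a * x)) ^ 4 = 3 / 8 * E[A] := by
  have hexpand (x : ℝ) : (∑ a ∈ A, cos (2 * π * a * x)) ^ 4 = ∑ a ∈ A, ∑ b ∈ A, ∑ c ∈ A, ∑ d ∈ A,
      cos (2 * π * a * x) * cos (2 * π * b * x) * (cos (2 * π * c * x) * cos (2 * π * d * x)) := by
    rw [show ∀ y : ℝ, y ^ 4 = y * y * (y * y) from fun y => by ring, sum_mul_sum]
    simp_rw [sum_mul, mul_sum]
  simp_rw [hexpand]
  simp (disch := exact fun _ _ => Continuous.intervalIntegrable (by fun_prop) _ _) only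
    [intervalIntegral.integral_finsetSum]
  have hterm : ∀ a ∈ A, ∀ b ∈ A, ∀ c ∈ A, ∀ d ∈ A, ∫ x in (0 : ℝ)..1,
      cos (2 * π * a * x) * cos (2 * π * b * x) * (cos (2 * π * c * x) * cos (2 * π * d * x)) =
      ((if a + b = c + d then 1 else 0) + (if a + c = b + d then 1 else 0) +
        if a + d = b + c then 1 else 0) / 8 := fun a ha b hb c hc d hd =>
    integral_cos_mul_cos_mul_cos_mul_cos (hA a ha b hb c hc d hd) (hA b hb a ha c hc d hd)
      (hA c hc a ha b hb d hd) (hA d hd a ha b hb c hc)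
  rw [sum_congr rfl fun a ha => sum_congr rfl fun b hb => sum_congr rfl fun c hc =>
    sum_congr rfl fun d hd => hterm a ha b hb c hc d hd]
  have hX : ∑ a ∈ A, ∑ b ∈ A, ∑ c ∈ A, ∑ d ∈ A, (if a + b = c + d then 1 else 0 : ℝ) = E[A] := by
    rw [addEnergy_eq_sum_ite]
    exact sum_congr rfl fun _ _ => sum_comm
  have hZ : ∑ a ∈ A, ∑ b ∈ A, ∑ c ∈ A, ∑ d ∈ A, (if a + d = b + c then 1 else 0 : ℝ) = E[A] := by
    rw [addEnergy_eq_sum_ite]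
    exact sum_congr rfl fun _ _ => sum_congr rfl fun _ _ => sum_comm
  simp only [← sum_div, sum_add_distrib, hX, hZ, ← addEnergy_eq_sum_ite]
  ring

theorem Finset.addEnergy_le_two_mul_card_sq {α : Type*} [Add α] [DecidableEq α] {s : Finset α}
    (hs : ∀ a ∈ s, ∀ b ∈ s, ∀ c ∈ s, ∀ d ∈ s, a + b = c + d → a = c ∧ b = d ∨ a = d ∧ b = c) :
    E[s] ≤ 2 * #s ^ 2 := by
  let diag := (s ×ˢ s).image fun p : α × α => ((p.1, p.1), (p.2, p.2))
  let cross := (s ×ˢ s).image fun p : α × α => ((p.1, p.2), (p.2, p.1))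
  calc E[s] ≤ #(diag ∪ cross) := by
        refine card_le_card fun ⟨⟨a₁, a₂⟩, b₁, b₂⟩ hx => ?_
        simp only [mem_filter, mem_product] at hx
        obtain ⟨⟨⟨ha₁, ha₂⟩, hb₁, hb₂⟩, heq⟩ := hx
        rcases hs a₁ ha₁ b₁ hb₁ a₂ ha₂ b₂ hb₂ heq with ⟨rfl, rfl⟩ | ⟨rfl, rfl⟩
        · exact mem_union_left _ (mem_image.2 ⟨(a₁, b₁), mem_product.2 ⟨ha₁, hb₁⟩, rfl⟩)
        · exact mem_union_right _ (mem_image.2 ⟨(a₁, b₁), mem_product.2 ⟨ha₁, hb₁⟩, rfl⟩)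
    _ ≤ #diag + #cross := card_union_le _ _
    _ ≤ #(s ×ˢ s) + #(s ×ˢ s) := add_le_add card_image_le card_image_le
    _ = 2 * #s ^ 2 := by rw [card_product]; ring

theorem ne_add_add_of_lacunary {A : Finset ℕ} (hpos : ∀ a ∈ A, 0 < a)
    (hA : ∀ a ∈ A, ∀ b ∈ A, a < b → 4 * a ≤ b) :
    ∀ a ∈ A, ∀ b ∈ A, ∀ c ∈ A, ∀ d ∈ A, a ≠ b + c + d := by
  intro a ha b hb c hc d hd
  have := hpos b hb; have := hpos c hc; have := hpos d hd
  have := hA b hb a ha; have := hA c hc a ha; have := hA d hd a ha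
  omega

theorem eq_and_eq_or_of_add_eq_add_of_lacunary {A : Finset ℕ} (hpos : ∀ a ∈ A, 0 < a)
    (hA : ∀ a ∈ A, ∀ b ∈ A, a < b → 4 * a ≤ b) :
    ∀ a ∈ A, ∀ b ∈ A, ∀ c ∈ A, ∀ d ∈ A, a + b = c + d → a = c ∧ b = d ∨ a = d ∧ b = c := by
  intro a ha b hb c hc d hd
  have := hpos a ha; have := hpos b hb; have := hpos c hc; have := hpos d hd
  have := hA a ha c hc; have := hA a ha d hd; have := hA b hb c hc; have := hA b hb d hd
  have := hA c hc a ha; have := hA d hd a ha; have := hA c hc b hb; have := hA d hd b hb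
  omega

theorem four_mul_le_of_mul_pow_lt_mul_pow {B : ℕ} (hB : 4 ≤ B) (c i j : ℕ)
    (h : c * B ^ i < c * B ^ j) : 4 * (c * B ^ i) ≤ c * B ^ j := by
  have hij : i < j := (Nat.pow_lt_pow_iff_right (by omega)).1 (Nat.lt_of_mul_lt_mul_left h)
  calc 4 * (c * B ^ i) ≤ c * B ^ (i + 1) := by rw [pow_succ]; nlinarith [Nat.zero_le (c * B ^ i)]
    _ ≤ c * B ^ j := Nat.mul_le_mul_left c (Nat.pow_le_pow_right (by omega) hij)

theorem integral_sum_cos_pow_four_le_of_lacunary {A : Finset ℕ} (hpos : ∀ a ∈ A, 0 < a)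
    (hA : ∀ a ∈ A, ∀ b ∈ A, a < b → 4 * a ≤ b) :
    ∫ x in (0 : ℝ)..1, (∑ a ∈ A, cos (2 * π * a * x)) ^ 4 ≤ 3 / 4 * (#A : ℝ) ^ 2 := by
  rw [integral_sum_cos_pow_four_eq_addEnergy (ne_add_add_of_lacunary hpos hA)]
  have hE : (E[A] : ℝ) ≤ 2 * (#A : ℝ) ^ 2 := by
    exact_mod_cast addEnergy_le_two_mul_card_sq (eq_and_eq_or_of_add_eq_add_of_lacunary hpos hA)
  linarith

theorem integral_sum_cos_geometric_pow_four_le {B c : ℕ} (hB : 4 ≤ B) (hc : 0 < c)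
    (F : Finset ℕ) :
    ∫ x in (0 : ℝ)..1, (∑ j ∈ F, cos (2 * π * (c * B ^ j : ℕ) * x)) ^ 4 ≤ 3 / 4 * (#F : ℝ) ^ 2 := by
  have hinj : Function.Injective fun j => c * B ^ j :=
    (mul_right_injective₀ hc.ne').comp (Nat.pow_right_injective (by omega))
  have h := integral_sum_cos_pow_four_le_of_lacunary (A := F.image fun j => c * B ^ j)
    (by simp only [mem_image]; rintro _ ⟨j, -, rfl⟩; positivity)
    (by
      simp only [mem_image]
      rintro _ ⟨i, -, rfl⟩ _ ⟨j, -, rfl⟩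
      exact four_mul_le_of_mul_pow_lt_mul_pow hB c i j)
  simpa [sum_image fun i _ j _ hij => hinj hij, card_image_of_injective _ hinj] using h

theorem meas_ge_le_integral_abs_pow_div {α : Type*} [MeasurableSpace α] {μ : Measure α}
    {f : α → ℝ} {p : ℕ} (hf : Integrable (fun x => |f x| ^ p) μ) {t : ℝ} (ht : 0 < t) :
    μ {x | t ≤ |f x|} ≤ ENNReal.ofReal ((∫ x, |f x| ^ p ∂μ) / t ^ p) := by
  have htp : 0 < t ^ p := pow_pos ht p
  calc μ {x | t ≤ |f x|}
      ≤ μ {x | ENNReal.ofReal (t ^ p) ≤ ENNReal.ofReal (|f x| ^ p)} :=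
        measure_mono fun x hx => ENNReal.ofReal_le_ofReal (pow_le_pow_left₀ ht.le hx p)
    _ ≤ (∫⁻ x, ENNReal.ofReal (|f x| ^ p) ∂μ) / ENNReal.ofReal (t ^ p) :=
        meas_ge_le_lintegral_div hf.aemeasurable.ennreal_ofReal (by simpa using htp)
          ENNReal.ofReal_ne_top
    _ = ENNReal.ofReal ((∫ x, |f x| ^ p ∂μ) / t ^ p) := by
        rw [← ofReal_integral_eq_lintegral_ofReal hf (ae_of_all _ fun x => by positivity),
          ENNReal.ofReal_div_of_pos htp]

theorem measure_large_cos_sum_le (n : ℕ) (hn : 1 ≤ n) :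
    volume {x : ℝ | x ∈ Set.Icc (0:ℝ) 1 ∧
        (n : ℝ) ^ ((3 : ℝ) / 4) ≤ |∑ j ∈ Finset.Icc 1 n, Real.cos (4 * π * 8 ^ j * x)|} ≤
      1 / (n : ℝ≥0∞) := by
  set S : ℝ → ℝ := fun x => ∑ j ∈ Finset.Icc 1 n, Real.cos (4 * π * 8 ^ j * x)
  have hS (x : ℝ) : S x = ∑ j ∈ Icc 1 n, cos (2 * π * (2 * 8 ^ j : ℕ) * x) :=
    sum_congr rfl fun j _ => by push_cast; ring_nf
  have hmoment : ∫ x in Set.Icc 0 1, |S x| ^ 4 ≤ 3 / 4 * (n : ℝ) ^ 2 := by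
    have h := integral_sum_cos_geometric_pow_four_le (by norm_num : 4 ≤ 8) two_pos (Icc 1 n)
    simp only [Nat.card_Icc, add_tsub_cancel_right] at h
    rw [integral_Icc_eq_integral_Ioc, ← intervalIntegral.integral_of_le zero_le_one]
    simpa only [Even.pow_abs (by decide : Even 4), hS] using h
  have hn' : (0 : ℝ) < n := by exact_mod_cast hn
  have hpow : ((n : ℝ) ^ ((3 : ℝ) / 4)) ^ 4 = (n : ℝ) ^ 3 := by
    rw [← Real.rpow_natCast, ← Real.rpow_mul hn'.le]
    norm_num
  calc volume {x : ℝ | x ∈ Set.Icc (0:ℝ) 1 ∧ (n : ℝ) ^ ((3 : ℝ) / 4) ≤ |S x|}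
      = volume.restrict (Set.Icc 0 1) {x | (n : ℝ) ^ ((3 : ℝ) / 4) ≤ |S x|} := by
        rw [Measure.restrict_apply' measurableSet_Icc, Set.inter_comm]; rfl
    _ ≤ ENNReal.ofReal ((∫ x in Set.Icc 0 1, |S x| ^ 4) / ((n : ℝ) ^ ((3 : ℝ) / 4)) ^ 4) :=
        meas_ge_le_integral_abs_pow_div (Continuous.integrableOn_Icc (by fun_prop)) (by positivity)
    _ ≤ ENNReal.ofReal (3 / 4 * (n : ℝ) ^ 2 / (n : ℝ) ^ 3) := by
        rw [hpow]
        gcongr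
    _ ≤ ENNReal.ofReal (1 / n) := by
        refine ENNReal.ofReal_le_ofReal ?_
        rw [div_le_div_iff₀ (by positivity) hn']
        nlinarith
    _ = 1 / (n : ℝ≥0∞) := by
        rw [ENNReal.ofReal_div_of_pos hn', ENNReal.ofReal_one, ENNReal.ofReal_natCast]
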